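/- arXiv:1707.07893 — 7 statements merged into one kernel-verified Lean document; each statement's English description precedes it below -/
import Mathlib

section
/- Let a : ℝ → M_n(ℂ) be continuous with a(t) Hermitian positive semidefinite for all t, and let G : ℝ → M_n(ℂ) solve G(0) = Id, G'(t) = -a(t)·G(t). Then for every t ≥ 0, the operator norm ‖G(t)‖ ≤ 1. -/
/-! For every vector `x`, `u t = G t x` satisfies `d/dt ‖u‖² = -2 re ⟪u, a u⟫ ≤ 0`, so
`‖G t x‖ ≤ ‖G 0 x‖ = ‖x‖` for `t ≥ 0`. -/

open scoped Matrix.Norms.L2Operator ComplexOrder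

open RCLike

section Dissipative

variable {𝕜 E : Type*} [RCLike 𝕜] [NormedAddCommGroup E] [InnerProductSpace 𝕜 E]
  [NormedSpace ℝ E]

theorem antitone_norm_of_re_inner_deriv_nonpos {u u' : ℝ → E}
    (hu : ∀ t, HasDerivAt u (u' t) t) (hdiss : ∀ t, re (inner 𝕜 (u t) (u' t)) ≤ 0) :
    Antitone (‖u ·‖) := by
  have hsq_deriv (t : ℝ) : HasDerivAt (‖u ·‖ ^ 2) (2 * re (inner 𝕜 (u t) (u' t))) t := by
    have h := reCLM.hasFDerivAt.comp_hasDerivAt t ((hu t).inner 𝕜 (hu t))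
    simp only [Function.comp_def, reCLM_apply, map_add, inner_self_eq_norm_sq,
      inner_re_symm (𝕜 := 𝕜) (u' t)] at h
    rwa [← two_mul] at h
  have hsq : Antitone (‖u ·‖ ^ 2) :=
    antitone_of_hasDerivAt_nonpos hsq_deriv fun t =>
      mul_nonpos_of_nonneg_of_nonpos zero_le_two (hdiss t)
  exact fun s t hst =>
    (pow_le_pow_iff_left₀ (norm_nonneg _) (norm_nonneg _) two_ne_zero).mp (hsq hst)

theorem antitone_opNorm_of_hasDerivAt_neg_mul {F A : ℝ → E →L[𝕜] E}
    (hF : ∀ t, HasDerivAt F (-A t * F t) t) (hA : ∀ t v, 0 ≤ re (inner 𝕜 v (A t v))) :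
    Antitone (‖F ·‖) := by
  have hFv (v : E) : Antitone (‖F · v‖) := by
    have hderiv (t : ℝ) : HasDerivAt (F · v) (-A t (F t v)) t :=
      ((ContinuousLinearMap.apply 𝕜 E v).restrictScalars ℝ).hasFDerivAt.comp_hasDerivAt t (hF t)
    refine antitone_norm_of_re_inner_deriv_nonpos (𝕜 := 𝕜) hderiv fun t => ?_
    rw [inner_neg_right, map_neg, neg_nonpos]
    exact hA t (F t v)
  exact fun s t hst => (F t).opNorm_le_bound (norm_nonneg _) fun v =>
    (hFv v hst).trans ((F s).le_opNorm v)

end Dissipative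

namespace Matrix

variable {n 𝕜 : Type*} [Fintype n] [DecidableEq n] [RCLike 𝕜]

theorem PosSemidef.re_inner_toEuclideanCLM_nonneg {A : Matrix n n 𝕜} (hA : A.PosSemidef)
    (v : EuclideanSpace 𝕜 n) : 0 ≤ re (inner 𝕜 v (toEuclideanCLM (n := n) (𝕜 := 𝕜) A v)) :=
  (isPositive_toEuclideanLin_iff.mpr hA).re_inner_nonneg_right v

theorem hasDerivAt_toEuclideanCLM {G : ℝ → Matrix n n ℂ} {G' : Matrix n n ℂ} {t : ℝ}
    (hG : HasDerivAt G G' t) :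
    HasDerivAt (fun s => toEuclideanCLM (n := n) (𝕜 := ℂ) (G s))
      (toEuclideanCLM (n := n) (𝕜 := ℂ) G') t :=
  ((LinearMap.toContinuousLinearMap (toEuclideanCLM (n := n) (𝕜 := ℂ)).toAlgEquiv.toLinearMap)
    |>.restrictScalars ℝ).hasFDerivAt.comp_hasDerivAt t hG

theorem l2_opNorm_one_le : ‖(1 : Matrix n n 𝕜)‖ ≤ 1 := by
  rw [cstar_norm_def, map_one]
  exact ContinuousLinearMap.norm_id_le

end Matrix

theorem stmt_0_general {n : ℕ} (a G : ℝ → Matrix (Fin n) (Fin n) ℂ)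
    (ha_psd : ∀ t, (a t).PosSemidef)
    (hG0 : G 0 = 1) (hG : ∀ t, HasDerivAt G (-(a t) * G t) t) :
    ∀ t, 0 ≤ t → ‖G t‖ ≤ 1 := by
  intro t ht
  have hF (s : ℝ) : HasDerivAt (fun s => Matrix.toEuclideanCLM (n := Fin n) (𝕜 := ℂ) (G s))
      (-Matrix.toEuclideanCLM (n := Fin n) (𝕜 := ℂ) (a s) *
        Matrix.toEuclideanCLM (n := Fin n) (𝕜 := ℂ) (G s)) s := by
    simpa only [map_mul, map_neg] using Matrix.hasDerivAt_toEuclideanCLM (hG s)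
  calc ‖G t‖ ≤ ‖G 0‖ := antitone_opNorm_of_hasDerivAt_neg_mul hF
        (fun s => (ha_psd s).re_inner_toEuclideanCLM_nonneg) ht
    _ ≤ 1 := hG0 ▸ Matrix.l2_opNorm_one_le

/-- If `a : ℝ → Mₙ(ℂ)` is continuous with Hermitian positive semidefinite values and
`G` solves `G 0 = 1`, `G' t = -a t * G t`, then `‖G t‖ ≤ 1` (ℓ² operator norm) for `t ≥ 0`. -/
theorem stmt_0 {n : ℕ} (a G : ℝ → Matrix (Fin n) (Fin n) ℂ)
    (ha_cont : Continuous a) (ha_psd : ∀ t, (a t).PosSemidef)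
    (hG0 : G 0 = 1) (hG : ∀ t, HasDerivAt G (-(a t) * G t) t) :
    ∀ t, 0 ≤ t → ‖G t‖ ≤ 1 :=
  stmt_0_general a G ha_psd hG0 hG
end

section
/- Let a : ℝ → M_n(ℂ) be continuous with a(t) Hermitian positive semidefinite, let G solve G(0) = Id, G'(t) = -a(t)G(t), and Γ(t) = G(t)G(t)*. Suppose t ↦ ‖Γ(t)‖₂ is differentiable at t₀ and y is a unit eigenvector of Γ(t₀) for the eigenvalue ‖Γ(t₀)‖₂. Then (d/dt ‖Γ(t)‖₂)|_{t=t₀} = -2‖Γ(t₀)‖₂ · ⟨a(t₀)y, y⟩. -/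
open Matrix
open scoped Matrix.Norms.L2Operator ComplexOrder

/-!
The function `t ↦ Re ⟨Γ(t) y, y⟩` lies below `t ↦ ‖Γ(t)‖₂` (Cauchy–Schwarz, `y` a unit vector)
and touches it at `t₀`, so the two derivatives agree there. Since `Γ' = B + Bᴴ` with
`B = G' Gᴴ = -a Γ`, the derivative of the quadratic form is
`2 Re ⟨B y, y⟩ = -2 ‖Γ(t₀)‖₂ Re ⟨a(t₀) y, y⟩`, because `Γ(t₀) y = ‖Γ(t₀)‖₂ y`.
-/

theorem HasDerivAt.eq_of_eventuallyLE_of_eq {f g : ℝ → ℝ} {f' g' x : ℝ}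
    (hf : HasDerivAt f f' x) (hg : HasDerivAt g g' x) (hle : f ≤ᶠ[nhds x] g) (heq : f x = g x) :
    f' = g' := by
  have hmin : IsLocalMin (g - f) x :=
    hle.mono fun t ht => by simpa [heq] using sub_nonneg.2 ht
  linarith [hmin.hasDerivAt_eq_zero (hg.sub hf)]

namespace Matrix

variable {𝕜 m : Type*} [RCLike 𝕜] [Fintype m]

theorem star_dotProduct_conjTranspose_mulVec (A : Matrix m m 𝕜) (v w : m → 𝕜) :
    star v ⬝ᵥ (Aᴴ *ᵥ w) = star (star w ⬝ᵥ (A *ᵥ v)) := by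
  rw [star_dotProduct, star_mulVec, ← dotProduct_mulVec, conjTranspose_conjTranspose]

theorem re_star_dotProduct_add_conjTranspose_mulVec (B : Matrix m m 𝕜) (v : m → 𝕜) :
    RCLike.re (star v ⬝ᵥ ((B + Bᴴ) *ᵥ v)) = 2 * RCLike.re (star v ⬝ᵥ (B *ᵥ v)) := by
  rw [add_mulVec, dotProduct_add, star_dotProduct_conjTranspose_mulVec, map_add,
    RCLike.star_def, RCLike.conj_re]
  ring

theorem norm_star_dotProduct_mulVec_le [DecidableEq m] (M : Matrix m m 𝕜) {y : m → 𝕜}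
    (hy : star y ⬝ᵥ y = 1) : ‖star y ⬝ᵥ (M *ᵥ y)‖ ≤ ‖M‖ := by
  set Y : EuclideanSpace 𝕜 m := WithLp.toLp 2 y
  have hY : ‖Y‖ = 1 := by
    have : ‖Y‖ ^ 2 = 1 := by
      rw [← RCLike.ofReal_inj (K := 𝕜), RCLike.ofReal_pow, ← inner_self_eq_norm_sq_to_K,
        EuclideanSpace.inner_toLp_toLp, dotProduct_comm, hy, RCLike.ofReal_one]
    nlinarith [norm_nonneg Y]
  calc ‖star y ⬝ᵥ (M *ᵥ y)‖ = ‖inner 𝕜 Y (WithLp.toLp 2 (M *ᵥ y))‖ := by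
        rw [EuclideanSpace.inner_toLp_toLp, dotProduct_comm]
    _ ≤ ‖Y‖ * ‖(WithLp.toLp 2 (M *ᵥ y) : EuclideanSpace 𝕜 m)‖ := norm_inner_le_norm _ _
    _ ≤ ‖Y‖ * (‖M‖ * ‖Y‖) := by gcongr; exact M.l2_opNorm_mulVec Y
    _ = ‖M‖ := by rw [hY, one_mul, mul_one]

end Matrix

theorem HasDerivAt.dotProduct_mulVec {𝕜 m : Type*} [RCLike 𝕜] [Fintype m]
    {F : ℝ → Matrix m m 𝕜} {F' : Matrix m m 𝕜} {t : ℝ} (hF : HasDerivAt F F' t) (v w : m → 𝕜) :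
    HasDerivAt (fun s => v ⬝ᵥ (F s *ᵥ w)) (v ⬝ᵥ (F' *ᵥ w)) t := by
  have hentry (i j : m) : HasDerivAt (fun s => F s i j) (F' i j) t :=
    hasDerivAt_pi.1 (hasDerivAt_pi.1 hF i) j
  simp only [dotProduct, mulVec]
  exact HasDerivAt.fun_sum fun i _ => (HasDerivAt.fun_sum fun j _ =>
    (hentry i j).mul_const (w j)).const_mul (v i)

theorem stmt_6_general {n : ℕ} (a G : ℝ → Matrix (Fin n) (Fin n) ℂ)
    (hG : ∀ t, HasDerivAt G (-(a t) * G t) t)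
    (t₀ d : ℝ)
    (hd : HasDerivAt (fun t => ‖G t * (G t)ᴴ‖) d t₀)
    (y : Fin n → ℂ) (hy : star y ⬝ᵥ y = 1)
    (heig : (G t₀ * (G t₀)ᴴ) *ᵥ y = (‖G t₀ * (G t₀)ᴴ‖ : ℂ) • y) :
    d = -2 * ‖G t₀ * (G t₀)ᴴ‖ * (star y ⬝ᵥ (a t₀ *ᵥ y)).re := by
  set B := -(a t₀) * G t₀ * (G t₀)ᴴ with hB
  have hΓ : HasDerivAt (fun t => G t * (G t)ᴴ) (B + Bᴴ) t₀ := by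
    have hGH : HasDerivAt (fun t => (G t)ᴴ) (-(a t₀) * G t₀)ᴴ t₀ := (hG t₀).star
    rw [hB, conjTranspose_mul, conjTranspose_conjTranspose]
    exact (hG t₀).mul hGH
  have hquad : HasDerivAt (fun t => (star y ⬝ᵥ ((G t * (G t)ᴴ) *ᵥ y)).re)
      (star y ⬝ᵥ ((B + Bᴴ) *ᵥ y)).re t₀ :=
    Complex.reCLM.hasFDerivAt.comp_hasDerivAt t₀ (hΓ.dotProduct_mulVec (star y) y)
  have hle : ∀ t, (star y ⬝ᵥ ((G t * (G t)ᴴ) *ᵥ y)).re ≤ ‖G t * (G t)ᴴ‖ := fun t =>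
    (Complex.re_le_norm _).trans ((G t * (G t)ᴴ).norm_star_dotProduct_mulVec_le hy)
  have heq : (star y ⬝ᵥ ((G t₀ * (G t₀)ᴴ) *ᵥ y)).re = ‖G t₀ * (G t₀)ᴴ‖ := by
    simp [heig, hy]
  have hBy : star y ⬝ᵥ (B *ᵥ y) =
      ((-‖G t₀ * (G t₀)ᴴ‖ : ℝ) : ℂ) * star y ⬝ᵥ (a t₀ *ᵥ y) := by
    rw [hB, Matrix.mul_assoc, ← mulVec_mulVec, heig, mulVec_smul, neg_mulVec, smul_neg,
      dotProduct_neg, dotProduct_smul, smul_eq_mul, Complex.ofReal_neg, neg_mul]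
  rw [(hquad.eq_of_eventuallyLE_of_eq hd (Filter.Eventually.of_forall hle) heq).symm,
    ← RCLike.re_to_complex, re_star_dotProduct_add_conjTranspose_mulVec, hBy,
    RCLike.re_to_complex, Complex.re_ofReal_mul]
  ring

/-- If `t ↦ ‖Γ t‖₂` (with `Γ t = G t (G t)*`) is differentiable at `t₀` with derivative `d`,
and `y` is a unit eigenvector of `Γ t₀` for the eigenvalue `‖Γ t₀‖₂`, then
`d = -2 ‖Γ t₀‖₂ ⟨a(t₀) y, y⟩`. -/
theorem stmt_6 {n : ℕ} (a G : ℝ → Matrix (Fin n) (Fin n) ℂ)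
    (ha_cont : Continuous a) (ha_psd : ∀ t, (a t).PosSemidef)
    (hG0 : G 0 = 1) (hG : ∀ t, HasDerivAt G (-(a t) * G t) t)
    (t₀ d : ℝ)
    (hd : HasDerivAt (fun t => ‖G t * (G t)ᴴ‖) d t₀)
    (y : Fin n → ℂ) (hy : star y ⬝ᵥ y = 1)
    (heig : (G t₀ * (G t₀)ᴴ) *ᵥ y = (‖G t₀ * (G t₀)ᴴ‖ : ℂ) • y) :
    d = -2 * ‖G t₀ * (G t₀)ᴴ‖ * (star y ⬝ᵥ (a t₀ *ᵥ y)).re :=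
  stmt_6_general a G hG t₀ d hd y hy heig
end

section
/- Let a : ℝ → M_n(ℂ) be a continuous, T-periodic map into the Hermitian positive semidefinite matrices, and let G solve G(0) = Id, G'(t) = -a(t)G(t). Then the limit C_∞ := lim_{t→∞} -(1/t) ln ‖G(t)‖₂ exists and equals -(1/T)·ln ρ(G(T)), where ρ denotes the spectral radius. -/
/-!
Uniqueness for the linear equation `X' = -a X` (Gronwall) gives the cocycle identity
`G (t + T) = G t * G T`, hence `G (k T) = G T ^ k`, and shows that every `G t` with `t ≥ 0` is
left regular, hence invertible. Positive semidefiniteness of `a` makes each `‖G t x‖`, and hence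
`‖G t‖₂`, nonincreasing in `t`. Gelfand's formula gives `log ‖G (k T)‖ / k → log ρ (G T)`, and
monotonicity of `‖G t‖₂` interpolates between consecutive multiples of `T`.
-/

open Matrix Filter Set Topology
open scoped Matrix.Norms.L2Operator ComplexOrder

theorem eqOn_zero_of_norm_deriv_le_mul {E : Type*} [NormedAddCommGroup E] [NormedSpace ℝ E]
    {f f' : ℝ → E} {c : ℝ → ℝ} {a b : ℝ} (hc : ContinuousOn c (Icc a b))
    (hf : ∀ t, HasDerivAt f (f' t) t) (ha : f a = 0)
    (bound : ∀ t ∈ Ico a b, ‖f' t‖ ≤ c t * ‖f t‖) : EqOn f 0 (Icc a b) := by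
  obtain ⟨C, hC⟩ := isCompact_Icc.exists_bound_of_continuousOn hc
  refine eq_zero_of_abs_deriv_le_mul_abs_self_of_eq_zero_right (K := C)
    (fun t _ => (hf t).continuousAt.continuousWithinAt) (fun t _ => (hf t).hasDerivWithinAt)
    ha fun t ht => (bound t ht).trans ?_
  exact mul_le_mul_of_nonneg_right ((le_abs_self _).trans (hC t (Ico_subset_Icc_self ht)))
    (norm_nonneg _)

section LinearODE

variable {R : Type*} [NormedRing R] [NormedAlgebra ℝ R] {a G : ℝ → R}

theorem add_period_eq_mul_of_hasDerivAt {T s : ℝ} (ha : Continuous a)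
    (ha_per : Function.Periodic a T) (hG0 : G 0 = 1) (hG : ∀ t, HasDerivAt G (-(a t) * G t) t)
    (hs : 0 ≤ s) :
    G (s + T) = G s * G T := by
  have hD : ∀ t, HasDerivAt (fun u => G (u + T) - G u * G T)
      (-(a t) * (G (t + T) - G t * G T)) t := by
    intro t
    have hshift := (hG (t + T)).comp_add_const t T
    rw [ha_per] at hshift
    exact (hshift.sub ((hG t).mul_const (G T))).congr_deriv (by noncomm_ring)
  have := eqOn_zero_of_norm_deriv_le_mul ha.norm.continuousOn hD (by simp [hG0])
    (fun t _ => by simpa only [norm_neg] using norm_mul_le (-(a t)) _) ⟨hs, le_rfl⟩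
  exact sub_eq_zero.1 this

theorem natCast_mul_eq_pow_of_hasDerivAt {T : ℝ} (hT : 0 ≤ T) (ha : Continuous a)
    (ha_per : Function.Periodic a T) (hG0 : G 0 = 1) (hG : ∀ t, HasDerivAt G (-(a t) * G t) t)
    (k : ℕ) : G (k * T) = G T ^ k := by
  induction k with
  | zero => simpa using hG0
  | succ k ih =>
    rw [Nat.cast_succ, add_one_mul, add_period_eq_mul_of_hasDerivAt ha ha_per hG0 hG
      (by positivity), ih, pow_succ]

-- If `G t * Y = 0`, then `s ↦ G (t - s) * Y` solves a linear equation and vanishes at `s = 0`,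
-- so it also vanishes at `s = t`, where it equals `Y`.
theorem isLeftRegular_of_hasDerivAt {t : ℝ} (ha : Continuous a) (hG0 : G 0 = 1)
    (hG : ∀ t, HasDerivAt G (-(a t) * G t) t) (ht : 0 ≤ t) : IsLeftRegular (G t) := by
  refine isLeftRegular_iff_right_eq_zero_of_mul.2 fun Y hY => ?_
  have hZ : ∀ s, HasDerivAt (fun u => G (t - u) * Y) (a (t - s) * (G (t - s) * Y)) s := by
    intro s
    exact (((hG (t - s)).comp_const_sub t s).mul_const Y).congr_deriv (by noncomm_ring)
  have := eqOn_zero_of_norm_deriv_le_mul (ha.norm.comp (continuous_sub_left t)).continuousOn hZ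
    (by simpa using hY) (fun s _ => norm_mul_le _ _) ⟨ht, le_rfl⟩
  simpa [hG0] using this

end LinearODE

theorem antitone_norm_of_inner_deriv_nonpos {F : Type*} [NormedAddCommGroup F]
    [InnerProductSpace ℝ F] {y y' : ℝ → F} (hy : ∀ t, HasDerivAt y (y' t) t)
    (hneg : ∀ t, inner ℝ (y t) (y' t) ≤ 0) : Antitone fun t => ‖y t‖ := by
  have hsq : Antitone fun t => ‖y t‖ ^ 2 :=
    antitone_of_deriv_nonpos (fun t => (hy t).norm_sq.differentiableAt) fun t => by
      rw [(hy t).norm_sq.deriv]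
      linarith [hneg t]
  exact fun s t hst => (pow_le_pow_iff_left₀ (norm_nonneg _) (norm_nonneg _) two_ne_zero).1
    (hsq hst)

theorem antitone_norm_of_hasDerivAt_neg_mul {E : Type*} [NormedAddCommGroup E]
    [InnerProductSpace ℂ E] {F A : ℝ → E →L[ℂ] E} (hF : ∀ t, HasDerivAt F (-(A t) * F t) t)
    (hA : ∀ t v, 0 ≤ RCLike.re (inner ℂ (A t v) v)) : Antitone fun t => ‖F t‖ := by
  let := InnerProductSpace.complexToReal (G := E)
  have horbit : ∀ v, Antitone fun t => ‖F t v‖ := by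
    intro v
    refine antitone_norm_of_inner_deriv_nonpos (y' := fun t => -(A t (F t v)))
      (fun t => ((ContinuousLinearMap.apply ℂ E v).restrictScalars ℝ).hasFDerivAt.comp_hasDerivAt
        t (hF t)) fun t => ?_
    rw [inner_neg_right, real_inner_eq_re_inner, ← inner_re_symm, neg_nonpos]
    exact hA t _
  exact fun s t hst => ContinuousLinearMap.opNorm_le_bound _ (norm_nonneg _) fun v =>
    (horbit v hst).trans ((F s).le_opNorm v)

theorem Matrix.antitone_l2_opNorm_of_hasDerivAt {n : Type*} [Fintype n] [DecidableEq n]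
    {a G : ℝ → Matrix n n ℂ} (ha : ∀ t, (a t).PosSemidef)
    (hG : ∀ t, HasDerivAt G (-(a t) * G t) t) : Antitone fun t => ‖G t‖ := by
  let Ψ := toEuclideanCLM (n := n) (𝕜 := ℂ)
  let Φ : Matrix n n ℂ →L[ℝ] EuclideanSpace ℂ n →L[ℂ] EuclideanSpace ℂ n :=
    LinearMap.mkContinuous (Ψ.toAlgEquiv.toLinearMap.restrictScalars ℝ) 1 fun A => by
      simp [Ψ, cstar_norm_def]
  refine antitone_norm_of_hasDerivAt_neg_mul (F := fun t => Ψ (G t)) (A := fun t => Ψ (a t))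
    (fun t => ?_) fun t v => ?_
  · have hΦ : ∀ A, Φ A = Ψ A := fun _ => rfl
    simpa only [Function.comp_def, hΦ, map_mul, map_neg] using
      Φ.hasFDerivAt.comp_hasDerivAt t (hG t)
  · exact (isPositive_toEuclideanLin_iff.2 (ha t)).re_inner_nonneg_left v

theorem tendsto_log_norm_pow_div_of_isUnit {A : Type*} [NormedRing A] [NormedAlgebra ℂ A]
    [CompleteSpace A] [Nontrivial A] {x : A} (hx : IsUnit x) :
    Tendsto (fun k : ℕ => Real.log ‖x ^ k‖ / k) atTop
      (𝓝 (Real.log (spectralRadius ℂ x).toReal)) := by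
  obtain ⟨μ, hμ, hρ⟩ := spectrum.exists_nnnorm_eq_spectralRadius_of_nonempty (spectrum.nonempty x)
  have hμ0 : μ ≠ 0 := by
    rintro rfl
    exact (spectrum.zero_mem_iff ℂ).1 hμ hx
  have hgelfand : Tendsto (fun k : ℕ => ‖x ^ k‖ ^ (1 / k : ℝ)) atTop (𝓝 ‖μ‖) := by
    have := (ENNReal.tendsto_toReal (hρ ▸ ENNReal.coe_ne_top)).comp
      (spectrum.pow_norm_pow_one_div_tendsto_nhds_spectralRadius x)
    rw [← hρ] at this
    exact this.congr fun k => ENNReal.toReal_ofReal (by positivity)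
  rw [← hρ]
  refine ((Real.continuousAt_log (norm_ne_zero_iff.2 hμ0)).tendsto.comp hgelfand).congr fun k => ?_
  rw [Function.comp_apply, Real.log_rpow (norm_pos_iff.2 (hx.pow k).ne_zero)]
  ring

theorem tendsto_div_of_monotoneOn_of_tendsto_natCast_mul {f : ℝ → ℝ} {T L : ℝ} (hT : 0 < T)
    (hf : MonotoneOn f (Ici 0)) (hlim : Tendsto (fun k : ℕ => f (k * T) / (k * T)) atTop (𝓝 L)) :
    Tendsto (fun t => f t / t) atTop (𝓝 L) := by
  set k : ℝ → ℕ := fun t => ⌊T⁻¹ * t⌋₊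
  have hk_top : Tendsto k atTop atTop :=
    tendsto_nat_floor_atTop.comp (tendsto_id.const_mul_atTop (inv_pos.2 hT))
  have hsucc : Tendsto (fun k : ℕ => f ((k + 1) * T) / (k * T)) atTop (𝓝 L) := by
    have := (hlim.comp (tendsto_add_atTop_nat 1)).div (tendsto_natCast_div_add_atTop (1 : ℝ))
      one_ne_zero
    rw [div_one] at this
    refine this.congr' ?_
    filter_upwards [eventually_ne_atTop 0] with j hj
    have : (j : ℝ) ≠ 0 := Nat.cast_ne_zero.2 hj
    simp only [Pi.div_apply, Function.comp_apply]
    push_cast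
    field_simp
  have hbracket : ∀ᶠ t in atTop, 0 < (k t : ℝ) * T ∧ (k t : ℝ) * T ≤ t ∧ t ≤ (k t + 1) * T := by
    filter_upwards [eventually_ge_atTop T] with t ht
    have hTt : 1 ≤ T⁻¹ * t := by rwa [inv_mul_eq_div, one_le_div hT]
    have hfloor := Nat.floor_le (zero_le_one.trans hTt)
    have hfloor' := Nat.lt_floor_add_one (T⁻¹ * t)
    refine ⟨mul_pos (by exact_mod_cast Nat.le_floor (by exact_mod_cast hTt)) hT, ?_, ?_⟩
    · rwa [← le_inv_mul_iff₀' hT]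
    · exact (inv_mul_le_iff₀' hT).1 hfloor'.le
  have hmid : Tendsto (fun t => f t / (k t * T)) atTop (𝓝 L) := by
    refine tendsto_of_tendsto_of_tendsto_of_le_of_le' (hlim.comp hk_top) (hsucc.comp hk_top)
      (hbracket.mono fun t ⟨hpos, hlo, _⟩ => ?_) (hbracket.mono fun t ⟨hpos, hlo, hhi⟩ => ?_)
    · exact div_le_div_of_nonneg_right (hf hpos.le (hpos.le.trans hlo) hlo) hpos.le
    · exact div_le_div_of_nonneg_right (hf (hpos.le.trans hlo) (hpos.le.trans (hlo.trans hhi)) hhi)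
        hpos.le
  have hratio : Tendsto (fun t => k t * T / t) atTop (𝓝 1) := by
    have := (tendsto_nat_floor_mul_div_atTop (inv_pos.2 hT).le).mul_const T
    rw [inv_mul_cancel₀ hT.ne'] at this
    exact this.congr fun t => by ring
  rw [← mul_one L]
  exact (hmid.mul hratio).congr' (hbracket.mono fun t ⟨hpos, _⟩ => div_mul_div_cancel₀ hpos.ne')

theorem tendsto_neg_log_norm_div_of_antitoneOn {A : Type*} [NormedRing A] [NormedAlgebra ℂ A]
    [CompleteSpace A] {g : ℝ → A} {T : ℝ} (hT : 0 < T) (hanti : AntitoneOn (‖g ·‖) (Ici 0))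
    (hunit : ∀ t, 0 ≤ t → IsUnit (g t)) (hpow : ∀ k : ℕ, g (k * T) = g T ^ k) :
    Tendsto (fun t : ℝ => -(1 / t) * Real.log ‖g t‖) atTop
      (𝓝 (-(1 / T) * Real.log (spectralRadius ℂ (g T)).toReal)) := by
  rcases subsingleton_or_nontrivial A with hA | hA
  · simp [Subsingleton.elim _ (0 : A), spectrum.SpectralRadius.of_subsingleton]
  have hpos : ∀ t, 0 ≤ t → 0 < ‖g t‖ := fun t ht => norm_pos_iff.2 (hunit t ht).ne_zero
  have hmono : MonotoneOn (fun t => -Real.log ‖g t‖) (Ici 0) := fun s hs t ht hst =>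
    neg_le_neg (Real.log_le_log (hpos t ht) (hanti hs ht hst))
  have hlim : Tendsto (fun k : ℕ => -Real.log ‖g (k * T)‖ / (k * T)) atTop
      (𝓝 (-(1 / T) * Real.log (spectralRadius ℂ (g T)).toReal)) := by
    convert ((tendsto_log_norm_pow_div_of_isUnit (hunit T hT.le)).div_const T).neg using 1
    · ext k
      rw [hpow]
      ring
    · congr 1
      ring
  convert tendsto_div_of_monotoneOn_of_tendsto_natCast_mul hT hmono hlim using 2
  ring

/-- For a continuous `T`-periodic Hermitian positive semidefinite damping `a` and `G` solving
`G 0 = 1`, `G' = -aG`, the limit `C_∞ = lim_{t→∞} -(1/t) log ‖G t‖₂` exists and equals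
`-(1/T) log ρ(G T)`, `ρ` the spectral radius. -/
theorem stmt_8 {n : ℕ} (T : ℝ) (hT : 0 < T)
    (a G : ℝ → Matrix (Fin n) (Fin n) ℂ)
    (ha_cont : Continuous a) (ha_psd : ∀ t, (a t).PosSemidef)
    (ha_per : ∀ t, a (t + T) = a t)
    (hG0 : G 0 = 1) (hG : ∀ t, HasDerivAt G (-(a t) * G t) t) :
    Tendsto (fun t : ℝ => -(1 / t) * Real.log ‖G t‖) atTop
      (nhds (-(1 / T) * Real.log ((spectralRadius ℂ (G T)).toReal))) :=
  tendsto_neg_log_norm_div_of_antitoneOn hT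
    ((Matrix.antitone_l2_opNorm_of_hasDerivAt ha_psd hG).antitoneOn _)
    (fun _ ht => IsArtinianRing.isUnit_iff_isLeftRegular.2
      (isLeftRegular_of_hasDerivAt ha_cont hG0 hG ht))
    (natCast_mul_eq_pow_of_hasDerivAt hT.le ha_cont ha_per hG0 hG)
end

section
/- Let X be a compact metric space, φ a continuous flow on X, and a : X → M_n(ℂ) continuous with values in the Hermitian positive semidefinite matrices. Suppose that for every x ∈ X, ⋂_{s∈ℝ} ker(a(φ_s(x))) = {0}. Then there exists T > 0 such that for all x ∈ X and all unit vectors y ∈ ℂⁿ, ∫₀ᵀ ⟨a(φ_t(x)) y, y⟩ dt > 0. -/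
open Matrix
open scoped ComplexOrder

open Filter

/-!
If `a(φ_t x) y = 0` for all `t ≥ 0`, then the same holds along the whole orbit of any cluster
point of the forward orbit of `x`, which the control condition forbids for `y ≠ 0`. So for each
`(x, y)` in the compact set `X × {unit vectors}` the integrand is positive at some time `t ≥ 0`,
and hence `∫₀ᵀ` is positive for all large `T`. These integrals are continuous in `(x, y)` and
nondecreasing in `T`, so the open sets where they are positive form an increasing cover, and
compactness gives a single `T`.
-/

theorem exists_forall_mem_of_forall_nonneg_mem {X : Type*} [TopologicalSpace X] [CompactSpace X]
    {φ : ℝ → X → X} (hφ : ∀ s, Continuous (φ s)) (hφ_add : ∀ s t x, φ (s + t) x = φ t (φ s x))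
    {S : Set X} (hS : IsClosed S) {x : X} (hx : ∀ t, 0 ≤ t → φ t x ∈ S) :
    ∃ z, ∀ s, φ s z ∈ S := by
  obtain ⟨z, hz⟩ : ∃ z, MapClusterPt z atTop (fun t => φ t x) :=
    exists_clusterPt_of_compactSpace _
  refine ⟨z, fun s => hS.mem_of_mapClusterPt (hz.continuousAt_comp (hφ s).continuousAt) ?_⟩
  filter_upwards [eventually_ge_atTop (-s)] with t ht
  simpa [← hφ_add] using hx (t + s) (by linarith)

theorem Matrix.PosSemidef.re_dotProduct_mulVec_nonneg {𝕜 ι : Type*} [RCLike 𝕜] [Fintype ι]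
    {A : Matrix ι ι 𝕜} (hA : A.PosSemidef) (y : ι → 𝕜) : 0 ≤ RCLike.re (star y ⬝ᵥ (A *ᵥ y)) :=
  (RCLike.nonneg_iff.mp (hA.dotProduct_mulVec_nonneg y)).1

theorem Matrix.PosSemidef.re_dotProduct_mulVec_pos {𝕜 ι : Type*} [RCLike 𝕜] [Fintype ι]
    {A : Matrix ι ι 𝕜} (hA : A.PosSemidef) {y : ι → 𝕜} (hy : A *ᵥ y ≠ 0) :
    0 < RCLike.re (star y ⬝ᵥ (A *ᵥ y)) :=
  (RCLike.pos_iff.mp ((hA.dotProduct_mulVec_nonneg y).lt_of_ne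
    (fun h => hy ((hA.dotProduct_mulVec_zero_iff y).mp h.symm)))).1

theorem isCompact_setOf_star_dotProduct_self_eq_one {𝕜 ι : Type*} [RCLike 𝕜] [Fintype ι] :
    IsCompact {y : ι → 𝕜 | star y ⬝ᵥ y = 1} := by
  have hsphere : {y : ι → 𝕜 | star y ⬝ᵥ y = 1} =
      WithLp.toLp 2 ⁻¹' Metric.sphere (0 : EuclideanSpace 𝕜 ι) 1 := by
    ext y
    have hnorm : star y ⬝ᵥ y = ((‖WithLp.toLp 2 y‖ ^ 2 : ℝ) : 𝕜) := by
      rw [RCLike.ofReal_pow, ← inner_self_eq_norm_sq_to_K,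
        EuclideanSpace.inner_eq_star_dotProduct, dotProduct_comm]
    rw [Set.mem_ofPred_eq, hnorm, ← RCLike.ofReal_one, RCLike.ofReal_inj,
      pow_eq_one_iff_of_nonneg (norm_nonneg _) two_ne_zero, Set.mem_preimage,
      mem_sphere_zero_iff_norm]
  rw [hsphere]
  exact (PiLp.continuousLinearEquiv 2 𝕜 _).toHomeomorph.symm.isCompact_preimage.mpr
    (isCompact_sphere 0 1)

theorem exists_pos_forall_intervalIntegral_pos {Y : Type*} [TopologicalSpace Y] {K : Set Y}
    (hK : IsCompact K) {F : Y → ℝ → ℝ} (hF : Continuous (Function.uncurry F))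
    (hF_nonneg : ∀ p t, 0 ≤ F p t) (hF_pos : ∀ p ∈ K, ∃ t, 0 ≤ t ∧ 0 < F p t) :
    ∃ T, 0 < T ∧ ∀ p ∈ K, 0 < ∫ t in (0 : ℝ)..T, F p t := by
  set U : ℕ → Set Y := fun m => {p | 0 < ∫ t in (0 : ℝ)..(m + 1), F p t}
  have hU_open : ∀ m, IsOpen (U m) := fun m =>
    isOpen_lt continuous_const
      (intervalIntegral.continuous_parametric_intervalIntegral_of_continuous' hF 0 _)
  have hU_mono : Monotone U := by
    intro m m' hm p hp
    refine hp.trans_le (intervalIntegral.integral_mono_interval le_rfl (by positivity)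
      (by exact_mod_cast Nat.add_le_add_right hm 1) (.of_forall (hF_nonneg p)) ?_)
    exact (hF.comp (Continuous.prodMk_right p)).intervalIntegrable _ _
  have hK_cover : K ⊆ ⋃ m, U m := by
    intro p hp
    obtain ⟨t, ht, hpt⟩ := hF_pos p hp
    refine Set.mem_iUnion.mpr ⟨⌈t⌉₊, intervalIntegral.integral_pos (by positivity)
      (hF.comp (Continuous.prodMk_right p)).continuousOn (fun s _ => hF_nonneg p s)
      ⟨t, ⟨ht, ?_⟩, hpt⟩⟩
    exact (Nat.le_ceil t).trans (by linarith)
  obtain ⟨m, hm⟩ := hK.elim_directed_cover U hU_open hK_cover hU_mono.directed_le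
  exact ⟨m + 1, by positivity, hm⟩

theorem stmt_11_general {n : ℕ} {X : Type*} [MetricSpace X] [CompactSpace X]
    (φ : ℝ → X → X) (hφ_cont : Continuous fun p : ℝ × X => φ p.1 p.2)
    (hφ_add : ∀ s t x, φ (s + t) x = φ t (φ s x))
    (a : X → Matrix (Fin n) (Fin n) ℂ) (ha_cont : Continuous a)
    (ha_psd : ∀ x, (a x).PosSemidef)
    (hGCC : ∀ x : X, ∀ v : Fin n → ℂ, (∀ s : ℝ, a (φ s x) *ᵥ v = 0) → v = 0) :
    ∃ T : ℝ, 0 < T ∧ ∀ x : X, ∀ y : Fin n → ℂ, star y ⬝ᵥ y = 1 →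
      0 < ∫ t in (0:ℝ)..T, (star y ⬝ᵥ (a (φ t x) *ᵥ y)).re := by
  have hφ : ∀ s, Continuous (φ s) := fun s => hφ_cont.comp (Continuous.prodMk_right s)
  have h_escape : ∀ x (y : Fin n → ℂ), y ≠ 0 → ∃ t, 0 ≤ t ∧ a (φ t x) *ᵥ y ≠ 0 := by
    intro x y hy
    by_contra! h_ker
    have h_closed : IsClosed {z | a z *ᵥ y = 0} :=
      isClosed_eq (ha_cont.matrix_mulVec continuous_const) continuous_const
    obtain ⟨z, hz⟩ := exists_forall_mem_of_forall_nonneg_mem hφ hφ_add h_closed h_ker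
    exact hy (hGCC z y hz)
  have h_pos : ∀ p ∈ (Set.univ : Set X) ×ˢ {y : Fin n → ℂ | star y ⬝ᵥ y = 1},
      ∃ t, 0 ≤ t ∧ 0 < (star p.2 ⬝ᵥ (a (φ t p.1) *ᵥ p.2)).re := by
    rintro ⟨x, y⟩ ⟨-, hy⟩
    obtain ⟨t, ht, hty⟩ := h_escape x y (by rintro rfl; simp at hy)
    exact ⟨t, ht, (ha_psd _).re_dotProduct_mulVec_pos hty⟩
  obtain ⟨T, hT, hT_pos⟩ := exists_pos_forall_intervalIntegral_pos
    (isCompact_univ.prod isCompact_setOf_star_dotProduct_self_eq_one) (by fun_prop)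
    (fun p t => (ha_psd _).re_dotProduct_mulVec_nonneg p.2) h_pos
  exact ⟨T, hT, fun x y hy => hT_pos (x, y) ⟨trivial, hy⟩⟩

/-- Compactness argument: if the geometric control condition holds (along every orbit of the
flow the kernels of `a` intersect trivially), then there is a uniform time `T > 0` such that
`∫₀ᵀ ⟨a(φ_t x) y, y⟩ dt > 0` for every `x` and every unit vector `y`. -/
theorem stmt_11 {n : ℕ} {X : Type*} [MetricSpace X] [CompactSpace X]
    (φ : ℝ → X → X) (hφ_cont : Continuous fun p : ℝ × X => φ p.1 p.2)
    (hφ0 : ∀ x, φ 0 x = x) (hφ_add : ∀ s t x, φ (s + t) x = φ t (φ s x))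
    (a : X → Matrix (Fin n) (Fin n) ℂ) (ha_cont : Continuous a)
    (ha_psd : ∀ x, (a x).PosSemidef)
    (hGCC : ∀ x : X, ∀ v : Fin n → ℂ, (∀ s : ℝ, a (φ s x) *ᵥ v = 0) → v = 0) :
    ∃ T : ℝ, 0 < T ∧ ∀ x : X, ∀ y : Fin n → ℂ, star y ⬝ᵥ y = 1 →
      0 < ∫ t in (0:ℝ)..T, (star y ⬝ᵥ (a (φ t x) *ᵥ y)).re :=
  stmt_11_general φ hφ_cont hφ_add a ha_cont ha_psd hGCC
end

section
/- Let M ∈ M_d(ℂ) be a matrix whose imaginary part Im(M) is symmetric positive definite, let x₀ ∈ ℝ^d, α ≥ 0, and let c ∈ L^∞(ℝ^d) satisfy |x - x₀|^{-α} c(x) ∈ L^∞(ℝ^d). Then there is a constant C > 0 independent of k such that for all k ≥ 1, ∫_{ℝ^d} |c(x)|² · |exp(ik⟨M(x-x₀), x-x₀⟩)|² dx ≤ C k^{-d/2 - α}. -/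
/-!
With `y = x - x₀`, the phase has modulus `exp (-k ⟨Im M y, y⟩)`, and positive definiteness gives
`⟨Im M y, y⟩ ≥ λ ‖y‖²` with `λ > 0` the minimum of the quadratic form on the unit sphere. Together
with `‖c x‖² ≤ K² ‖y‖^(2α)` the integrand is dominated by `K² ‖y‖^(2α) exp (-2λk ‖y‖²)`, and the
substitution `y = u / √k` turns the integral of this majorant into `k^(-d/2-α)` times a finite
Gaussian moment.
-/

open MeasureTheory Real

lemma rpow_le_exp_mul_exp_mul_sq {a b t : ℝ} (ha : 0 ≤ a) (hb : 0 < b) (ht : 0 ≤ t) :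
    t ^ a ≤ exp (a ^ 2 / (4 * b)) * exp (b * t ^ 2) := by
  have hsq : a * t ≤ a ^ 2 / (4 * b) + b * t ^ 2 := by
    have : a ^ 2 / (4 * b) + b * t ^ 2 - a * t = (2 * b * t - a) ^ 2 / (4 * b) := by
      field_simp; ring
    linarith [div_nonneg (sq_nonneg (2 * b * t - a)) (by positivity : (0 : ℝ) ≤ 4 * b)]
  calc t ^ a ≤ exp t ^ a :=
        rpow_le_rpow ht ((le_add_of_nonneg_right zero_le_one).trans (add_one_le_exp t)) ha
    _ = exp (a * t) := by rw [← exp_mul, mul_comm]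
    _ ≤ exp (a ^ 2 / (4 * b)) * exp (b * t ^ 2) := by rw [← exp_add]; exact exp_le_exp.2 hsq

section GaussianWeight

variable {V : Type*} [NormedAddCommGroup V] [InnerProductSpace ℝ V] [FiniteDimensional ℝ V]
  [MeasurableSpace V] [BorelSpace V]

lemma integrable_exp_neg_mul_sq_norm {b : ℝ} (hb : 0 < b) :
    Integrable (fun v : V => exp (-b * ‖v‖ ^ 2)) := by
  have := (GaussianFourier.integrable_cexp_neg_mul_sq_norm_add (V := V) (b := b)
    (by simpa using hb) 0 0).norm
  simpa [Complex.norm_exp, ← Complex.ofReal_pow, ← Complex.ofReal_neg, ← Complex.ofReal_mul]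
    using this

lemma integrable_norm_rpow_mul_exp_neg_mul_sq {a b : ℝ} (ha : 0 ≤ a) (hb : 0 < b) :
    Integrable (fun v : V => ‖v‖ ^ a * exp (-b * ‖v‖ ^ 2)) := by
  refine ((integrable_exp_neg_mul_sq_norm (half_pos hb)).const_mul
    (exp (a ^ 2 / (4 * (b / 2))))).mono' (by fun_prop) (ae_of_all _ fun v => ?_)
  rw [norm_of_nonneg (by positivity)]
  calc ‖v‖ ^ a * exp (-b * ‖v‖ ^ 2)
      ≤ exp (a ^ 2 / (4 * (b / 2))) * exp (b / 2 * ‖v‖ ^ 2) * exp (-b * ‖v‖ ^ 2) := by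
        gcongr; exact rpow_le_exp_mul_exp_mul_sq ha (half_pos hb) (norm_nonneg v)
    _ = exp (a ^ 2 / (4 * (b / 2))) * exp (-(b / 2) * ‖v‖ ^ 2) := by
        rw [mul_assoc, ← exp_add]; ring_nf

lemma integral_norm_rpow_mul_exp_neg_mul_mul_sq (a b : ℝ) {k : ℝ} (hk : 0 < k) :
    ∫ v : V, ‖v‖ ^ a * exp (-(b * k) * ‖v‖ ^ 2) =
      k ^ (-(a + Module.finrank ℝ V) / 2) * ∫ v : V, ‖v‖ ^ a * exp (-b * ‖v‖ ^ 2) := by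
  have hscale : ∀ v : V, ‖√k • v‖ ^ a * exp (-b * ‖√k • v‖ ^ 2) =
      k ^ (a / 2) * (‖v‖ ^ a * exp (-(b * k) * ‖v‖ ^ 2)) := by
    intro v
    rw [norm_smul, norm_of_nonneg (sqrt_nonneg k), mul_rpow (sqrt_nonneg k) (norm_nonneg v),
      sqrt_eq_rpow, ← rpow_mul hk.le, mul_pow, ← rpow_natCast, ← rpow_mul hk.le,
      show (1 / 2 : ℝ) * (2 : ℕ) = 1 by norm_num, rpow_one]
    ring_nf
  have := Measure.integral_comp_smul_of_nonneg volume
    (fun v : V => ‖v‖ ^ a * exp (-b * ‖v‖ ^ 2)) (√k) (hR := sqrt_nonneg k)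
  simp only [hscale, integral_const_mul, smul_eq_mul] at this
  have hsqrt_pow : (√k ^ Module.finrank ℝ V)⁻¹ = k ^ (-(Module.finrank ℝ V : ℝ) / 2) := by
    rw [sqrt_eq_rpow, ← rpow_natCast, ← rpow_mul hk.le, ← rpow_neg hk.le]
    ring_nf
  rw [hsqrt_pow] at this
  rw [show -(a + Module.finrank ℝ V) / 2 = -(a / 2) + -(Module.finrank ℝ V : ℝ) / 2 by ring,
    rpow_add hk, mul_assoc, ← this, ← mul_assoc, ← rpow_add hk, neg_add_cancel, rpow_zero, one_mul]

end GaussianWeight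

lemma exists_pos_mul_sq_norm_le_of_homogeneous {E : Type*} [NormedAddCommGroup E]
    [NormedSpace ℝ E] [FiniteDimensional ℝ E] {Q : E → ℝ} (hQ : Continuous Q)
    (hsmul : ∀ (t : ℝ) (v : E), Q (t • v) = t ^ 2 * Q v) (hpos : ∀ v, v ≠ 0 → 0 < Q v) :
    ∃ lam, 0 < lam ∧ ∀ v, lam * ‖v‖ ^ 2 ≤ Q v := by
  have hQ0 : Q 0 = 0 := by simpa using hsmul 0 0
  cases subsingleton_or_nontrivial E with
  | inl _ => exact ⟨1, one_pos, fun v => by simp [Subsingleton.elim v 0, hQ0]⟩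
  | inr _ =>
    obtain ⟨u, hu, hmin⟩ := (isCompact_sphere (0 : E) 1).exists_isMinOn
      (NormedSpace.sphere_nonempty.2 zero_le_one) hQ.continuousOn
    refine ⟨Q u, hpos u (ne_zero_of_mem_sphere one_ne_zero ⟨u, hu⟩), fun v => ?_⟩
    rcases eq_or_ne v 0 with rfl | hv
    · simp [hQ0]
    · have hvpos : 0 < ‖v‖ := norm_pos_iff.2 hv
      have hle : Q u ≤ (‖v‖⁻¹) ^ 2 * Q v := by
        rw [← hsmul]
        exact hmin (by simp [norm_smul, hvpos.ne'])
      calc Q u * ‖v‖ ^ 2 ≤ (‖v‖⁻¹) ^ 2 * Q v * ‖v‖ ^ 2 := by gcongr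
        _ = Q v := by field_simp

lemma Matrix.PosDef.exists_pos_mul_sq_norm_le_sum_sum {ι : Type*} [Fintype ι]
    {A : Matrix ι ι ℝ} (hA : A.PosDef) :
    ∃ lam, 0 < lam ∧ ∀ v : EuclideanSpace ℝ ι, lam * ‖v‖ ^ 2 ≤ ∑ i, ∑ j, A i j * v i * v j := by
  refine exists_pos_mul_sq_norm_le_of_homogeneous (by fun_prop) (fun t v => ?_) (fun v hv => ?_)
  · simp only [WithLp.ofLp_smul, Pi.smul_apply, smul_eq_mul, Finset.mul_sum]
    exact Finset.sum_congr rfl fun i _ => Finset.sum_congr rfl fun j _ => by ring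
  · refine (hA.dotProduct_mulVec_pos (x := v.ofLp) (by simpa using hv)).trans_eq ?_
    simp only [star_trivial, dotProduct, Matrix.mulVec, Finset.mul_sum]
    exact Finset.sum_congr rfl fun i _ => Finset.sum_congr rfl fun j _ => by ring

lemma norm_cexp_I_mul_sum_sum {ι : Type*} [Fintype ι] (M : Matrix ι ι ℂ) (k : ℝ) (v : ι → ℝ) :
    ‖Complex.exp (Complex.I * k * ∑ i, ∑ j, M i j * v i * v j)‖ =
      exp (-(k * ∑ i, ∑ j, (M i j).im * v i * v j)) := by
  rw [Complex.norm_exp]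
  congr 1
  simp [Complex.mul_re, Complex.mul_im, Complex.im_sum]

lemma sq_norm_cexp_I_mul_sum_sum_le {ι : Type*} [Fintype ι] {M : Matrix ι ι ℂ} {lam k : ℝ}
    (hk : 0 ≤ k)
    (hcoer : ∀ v : EuclideanSpace ℝ ι, lam * ‖v‖ ^ 2 ≤ ∑ i, ∑ j, (M i j).im * v i * v j)
    (v : EuclideanSpace ℝ ι) :
    ‖Complex.exp (Complex.I * k * ∑ i, ∑ j, M i j * (v i : ℂ) * (v j : ℂ))‖ ^ 2 ≤
      exp (-(2 * lam * k) * ‖v‖ ^ 2) := by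
  rw [norm_cexp_I_mul_sum_sum M k v, ← exp_nat_mul]
  have := hcoer v
  exact exp_le_exp.2 (by push_cast; nlinarith)

lemma sq_le_sq_mul_rpow_two_mul {a K r α : ℝ} (ha : 0 ≤ a) (hr : 0 ≤ r) (h : a ≤ K * r ^ α) :
    a ^ 2 ≤ K ^ 2 * r ^ (2 * α) :=
  calc a ^ 2 ≤ (K * r ^ α) ^ 2 := by gcongr
    _ = K ^ 2 * r ^ (2 * α) := by
      rw [mul_pow, ← rpow_natCast (r ^ α), ← rpow_mul hr]
      norm_num [mul_comm]

theorem stmt_12_general {d : ℕ} (M : Matrix (Fin d) (Fin d) ℂ)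
    (hIm : (Matrix.of fun i j => (M i j).im).PosDef)
    (x₀ : EuclideanSpace ℝ (Fin d)) (α : ℝ) (hα : 0 ≤ α)
    (c : EuclideanSpace ℝ (Fin d) → ℂ)
    (K : ℝ)
    (hc_van : ∀ x, ‖c x‖ ≤ K * ‖x - x₀‖ ^ α) :
    ∃ C : ℝ, 0 < C ∧ ∀ k : ℝ, 1 ≤ k →
      (∫ x : EuclideanSpace ℝ (Fin d),
        ‖c x‖ ^ 2 * ‖Complex.exp (Complex.I * (k : ℂ) *
          ∑ i, ∑ i', M i i' * ((x i - x₀ i : ℝ) : ℂ) * ((x i' - x₀ i' : ℝ) : ℂ))‖ ^ 2) ≤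
      C * k ^ (-(d : ℝ) / 2 - α) := by
  obtain ⟨lam, hlam, hcoer⟩ := hIm.exists_pos_mul_sq_norm_le_sum_sum
  set I := ∫ v : EuclideanSpace ℝ (Fin d), ‖v‖ ^ (2 * α) * exp (-(2 * lam) * ‖v‖ ^ 2)
  have hI : 0 ≤ I := integral_nonneg fun v => by positivity
  refine ⟨K ^ 2 * I + 1, by positivity, fun k hk => ?_⟩
  have hk0 : 0 < k := one_pos.trans_le hk
  set g := fun v : EuclideanSpace ℝ (Fin d) => ‖v‖ ^ (2 * α) * exp (-(2 * lam * k) * ‖v‖ ^ 2)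
  have hg : Integrable g := integrable_norm_rpow_mul_exp_neg_mul_sq (by positivity) (by positivity)
  calc _ ≤ ∫ x, K ^ 2 * g (x - x₀) := by
        refine integral_mono_of_nonneg (ae_of_all _ fun x => by positivity)
          ((hg.comp_sub_right x₀).const_mul _) (ae_of_all _ fun x => ?_)
        dsimp only [g]
        rw [← mul_assoc]
        gcongr
        · exact sq_le_sq_mul_rpow_two_mul (norm_nonneg _) (norm_nonneg _) (hc_van x)
        · exact sq_norm_cexp_I_mul_sum_sum_le hk0.le hcoer (x - x₀)
    _ = K ^ 2 * I * k ^ (-(d : ℝ) / 2 - α) := by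
        rw [integral_const_mul, integral_sub_right_eq_self g x₀,
          integral_norm_rpow_mul_exp_neg_mul_mul_sq _ _ hk0, finrank_euclideanSpace_fin,
          show -(2 * α + d) / 2 = -(d : ℝ) / 2 - α by ring]
        ring
    _ ≤ (K ^ 2 * I + 1) * k ^ (-(d : ℝ) / 2 - α) := by gcongr; linarith

/-- Ralston's lemma: if `Im M` is (symmetric) positive definite, `c ∈ L^∞` with
`|x-x₀|^{-α} c(x) ∈ L^∞`, then `∫ |c(x)|² |exp(ik⟨M(x-x₀),x-x₀⟩)|² dx ≤ C k^{-d/2-α}`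
for all `k ≥ 1`. -/
theorem stmt_12 {d : ℕ} (M : Matrix (Fin d) (Fin d) ℂ)
    (hIm : (Matrix.of fun i j => (M i j).im).PosDef)
    (x₀ : EuclideanSpace ℝ (Fin d)) (α : ℝ) (hα : 0 ≤ α)
    (c : EuclideanSpace ℝ (Fin d) → ℂ) (hc_meas : Measurable c)
    (K : ℝ) (hc_bdd : ∀ x, ‖c x‖ ≤ K)
    (hc_van : ∀ x, ‖c x‖ ≤ K * ‖x - x₀‖ ^ α) :
    ∃ C : ℝ, 0 < C ∧ ∀ k : ℝ, 1 ≤ k →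
      (∫ x : EuclideanSpace ℝ (Fin d),
        ‖c x‖ ^ 2 * ‖Complex.exp (Complex.I * (k : ℂ) *
          ∑ i, ∑ i', M i i' * ((x i - x₀ i : ℝ) : ℂ) * ((x i' - x₀ i' : ℝ) : ℂ))‖ ^ 2) ≤
      C * k ^ (-(d : ℝ) / 2 - α) :=
  stmt_12_general M hIm x₀ α hα c K hc_van
end

section
/- Let σ > 0 and consider continuous maps a, b from a compact space X with flow φ into Hermitian positive semidefinite n×n matrices, and let G^a, G^b, G^{a+b} denote the corresponding cocycle solutions of G(0)=Id, ∂_t G_t(x) = -c(φ_t(x))G_t(x) for c ∈ {a, b, a+b}. Then it is NOT true in general that ρ(G^{a+b}_T(x)) ≤ ρ(G^a_T(x))·ρ(G^b_T(x)) nor the reverse: concretely, there exist 2×2 Hermitian positive definite matrices A₁, A₂, B₁, B₂ with eigenvalues in (0,1] such that ρ(A₁B₁A₂B₂) > ρ(A₁A₂)·ρ(B₁B₂), and other such matrices with ρ(A₁B₁A₂B₂) < ρ(A₁A₂)·ρ(B₁B₂). -/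
open Matrix
open scoped ComplexOrder

private lemma mem_spec (M : Matrix (Fin 2) (Fin 2) ℂ) (z : ℂ) :
    z ∈ spectrum ℂ M ↔ (z - M 0 0) * (z - M 1 1) - M 0 1 * M 1 0 = 0 := by
  rw [spectrum.mem_iff, Matrix.isUnit_iff_isUnit_det, Matrix.det_fin_two]
  simp [Matrix.algebraMap_matrix_apply, isUnit_iff_ne_zero]

private lemma nnnorm_le_sr {M : Matrix (Fin 2) (Fin 2) ℂ} {z : ℂ} (hz : z ∈ spectrum ℂ M) :
    (‖z‖₊ : ENNReal) ≤ spectralRadius ℂ M :=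
  le_iSup₂ (f := fun k (_ : k ∈ spectrum ℂ M) => (‖k‖₊ : ENNReal)) z hz

private lemma sr_singleton (M : Matrix (Fin 2) (Fin 2) ℂ) (z0 : ℂ)
    (h : spectrum ℂ M = {z0}) : spectralRadius ℂ M = ‖z0‖₊ := by
  unfold spectralRadius
  rw [h]
  simp

private lemma sr_pair (M : Matrix (Fin 2) (Fin 2) ℂ) (a b : ℂ) (h : spectrum ℂ M = {a, b}) :
    spectralRadius ℂ M = (‖a‖₊ : ENNReal) ⊔ ‖b‖₊ := by
  unfold spectralRadius
  rw [h, Set.insert_eq, iSup_union]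
  simp

private noncomputable def lam : ℝ :=
  (-9201/160000 - Real.sqrt ((9201/160000)^2 - 9/640000))/2

/-- The spectral radius of interleaved products is in general neither below nor above the
product of spectral radii: there are 2×2 Hermitian positive definite matrices with eigenvalues
in `(0,1]` with `ρ(A₁B₁A₂B₂) > ρ(A₁A₂)ρ(B₁B₂)`, and others with the reverse strict
inequality. -/
theorem stmt_14 :
    (∃ A₁ A₂ B₁ B₂ : Matrix (Fin 2) (Fin 2) ℂ,
      A₁.PosDef ∧ A₂.PosDef ∧ B₁.PosDef ∧ B₂.PosDef ∧
      (1 - A₁).PosSemidef ∧ (1 - A₂).PosSemidef ∧ (1 - B₁).PosSemidef ∧ (1 - B₂).PosSemidef ∧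
      spectralRadius ℂ (A₁ * A₂) * spectralRadius ℂ (B₁ * B₂) <
        spectralRadius ℂ (A₁ * B₁ * A₂ * B₂)) ∧
    (∃ A₁ A₂ B₁ B₂ : Matrix (Fin 2) (Fin 2) ℂ,
      A₁.PosDef ∧ A₂.PosDef ∧ B₁.PosDef ∧ B₂.PosDef ∧
      (1 - A₁).PosSemidef ∧ (1 - A₂).PosSemidef ∧ (1 - B₁).PosSemidef ∧ (1 - B₂).PosSemidef ∧
      spectralRadius ℂ (A₁ * B₁ * A₂ * B₂) <
        spectralRadius ℂ (A₁ * A₂) * spectralRadius ℂ (B₁ * B₂)) := by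
  constructor
  · -- superadditive violation
    refine ⟨!![1,0;0,1/100], !![1/100,0;0,1], !![1/2,1/4;1/4,1/2], !![1/2,-1/4;-1/4,1/2],
      ?_, ?_, ?_, ?_, ?_, ?_, ?_, ?_, ?_⟩
    · have h : (!![(1:ℂ),0;0,1/100] : Matrix (Fin 2) (Fin 2) ℂ) = diagonal ![1,1/100] := by
        ext i j; fin_cases i <;> fin_cases j <;> simp [diagonal]
      rw [h]
      exact Matrix.posDef_diagonal_iff.mpr fun i => by
        fin_cases i <;> (rw [Complex.lt_def]; norm_num)
    · have h : (!![(1/100:ℂ),0;0,1] : Matrix (Fin 2) (Fin 2) ℂ) = diagonal ![1/100,1] := by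
        ext i j; fin_cases i <;> fin_cases j <;> simp [diagonal]
      rw [h]
      exact Matrix.posDef_diagonal_iff.mpr fun i => by
        fin_cases i <;> (rw [Complex.lt_def]; norm_num)
    · have h : (!![(1/2:ℂ),1/4;1/4,1/2] : Matrix (Fin 2) (Fin 2) ℂ)
          = diagonal ![1/4,1/4] + (!![(1/2:ℂ),1/2;0,0])ᴴ * !![(1/2:ℂ),1/2;0,0] := by
        ext i j; fin_cases i <;> fin_cases j <;>
          simp [diagonal, Matrix.mul_apply, Fin.sum_univ_two, map_inv₀, map_ofNat] <;> norm_num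
      rw [h]
      refine Matrix.PosDef.add_posSemidef ?_ (Matrix.posSemidef_conjTranspose_mul_self _)
      exact Matrix.posDef_diagonal_iff.mpr fun i => by
        fin_cases i <;> (rw [Complex.lt_def]; norm_num)
    · have h : (!![(1/2:ℂ),-1/4;-1/4,1/2] : Matrix (Fin 2) (Fin 2) ℂ)
          = diagonal ![1/4,1/4] + (!![(1/2:ℂ),-1/2;0,0])ᴴ * !![(1/2:ℂ),-1/2;0,0] := by
        ext i j; fin_cases i <;> fin_cases j <;>
          simp [diagonal, Matrix.mul_apply, Fin.sum_univ_two, map_inv₀, map_ofNat] <;> norm_num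
      rw [h]
      refine Matrix.PosDef.add_posSemidef ?_ (Matrix.posSemidef_conjTranspose_mul_self _)
      exact Matrix.posDef_diagonal_iff.mpr fun i => by
        fin_cases i <;> (rw [Complex.lt_def]; norm_num)
    · have h : (1 - !![(1:ℂ),0;0,1/100] : Matrix (Fin 2) (Fin 2) ℂ)
          = diagonal ![0,99/100] := by
        ext i j; fin_cases i <;> fin_cases j <;>
          simp [diagonal, Matrix.one_apply] <;> norm_num
      rw [h]
      exact Matrix.posSemidef_diagonal_iff.mpr fun i => by
        fin_cases i <;> (rw [Complex.le_def]; norm_num)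
    · have h : (1 - !![(1/100:ℂ),0;0,1] : Matrix (Fin 2) (Fin 2) ℂ)
          = diagonal ![99/100,0] := by
        ext i j; fin_cases i <;> fin_cases j <;>
          simp [diagonal, Matrix.one_apply] <;> norm_num
      rw [h]
      exact Matrix.posSemidef_diagonal_iff.mpr fun i => by
        fin_cases i <;> (rw [Complex.le_def]; norm_num)
    · have h : (1 - !![(1/2:ℂ),1/4;1/4,1/2] : Matrix (Fin 2) (Fin 2) ℂ)
          = diagonal ![1/4,1/4] + (!![(1/2:ℂ),-1/2;0,0])ᴴ * !![(1/2:ℂ),-1/2;0,0] := by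
        ext i j; fin_cases i <;> fin_cases j <;>
          simp [diagonal, Matrix.one_apply, Matrix.mul_apply, Fin.sum_univ_two,
            map_inv₀, map_ofNat] <;> norm_num
      rw [h]
      refine (Matrix.PosDef.add_posSemidef ?_
        (Matrix.posSemidef_conjTranspose_mul_self _)).posSemidef
      exact Matrix.posDef_diagonal_iff.mpr fun i => by
        fin_cases i <;> (rw [Complex.lt_def]; norm_num)
    · have h : (1 - !![(1/2:ℂ),-1/4;-1/4,1/2] : Matrix (Fin 2) (Fin 2) ℂ)
          = diagonal ![1/4,1/4] + (!![(1/2:ℂ),1/2;0,0])ᴴ * !![(1/2:ℂ),1/2;0,0] := by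
        ext i j; fin_cases i <;> fin_cases j <;>
          simp [diagonal, Matrix.one_apply, Matrix.mul_apply, Fin.sum_univ_two,
            map_inv₀, map_ofNat] <;> norm_num
      rw [h]
      refine (Matrix.PosDef.add_posSemidef ?_
        (Matrix.posSemidef_conjTranspose_mul_self _)).posSemidef
      exact Matrix.posDef_diagonal_iff.mpr fun i => by
        fin_cases i <;> (rw [Complex.lt_def]; norm_num)
    · -- the spectral radius inequality
      have hAA : (!![(1:ℂ),0;0,1/100]) * !![(1/100:ℂ),0;0,1] = !![(1/100:ℂ),0;0,1/100] := by
        norm_num [Matrix.mul_fin_two]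
      have hBB : (!![(1/2:ℂ),1/4;1/4,1/2]) * !![(1/2:ℂ),-1/4;-1/4,1/2]
          = !![(3/16:ℂ),0;0,3/16] := by
        norm_num [Matrix.mul_fin_two]
      have hM : (!![(1:ℂ),0;0,1/100]) * !![(1/2:ℂ),1/4;1/4,1/2] * !![(1/100:ℂ),0;0,1]
            * !![(1/2:ℂ),-1/4;-1/4,1/2]
          = !![-3/50, 99/800; -99/80000, 399/160000] := by
        norm_num [Matrix.mul_fin_two]
      rw [hAA, hBB, hM]
      have hspecA : spectrum ℂ (!![(1/100:ℂ),0;0,1/100]) = {1/100} := by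
        ext z
        rw [mem_spec]
        simp only [Set.mem_singleton_iff]
        norm_num [Matrix.cons_val_zero, Matrix.cons_val_one, sub_eq_zero]
      have hspecB : spectrum ℂ (!![(3/16:ℂ),0;0,3/16]) = {3/16} := by
        ext z
        rw [mem_spec]
        simp only [Set.mem_singleton_iff]
        norm_num [Matrix.cons_val_zero, Matrix.cons_val_one, sub_eq_zero]
      rw [sr_singleton _ _ hspecA, sr_singleton _ _ hspecB]
      have hs : (0:ℝ) ≤ (9201/160000)^2 - 9/640000 := by norm_num
      have hlam_mem : ((lam:ℂ)) ∈
          spectrum ℂ (!![-3/50, 99/800; -99/80000, 399/160000] : Matrix (Fin 2) (Fin 2) ℂ) := by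
        rw [mem_spec]
        have hr : lam^2 + (9201/160000)*lam + 9/2560000 = 0 := by
          have h := Real.sq_sqrt hs
          unfold lam
          nlinarith [h]
        have hc := congrArg (Complex.ofReal) hr
        push_cast at hc
        norm_num [Matrix.cons_val_zero, Matrix.cons_val_one]
        linear_combination hc
      refine lt_of_lt_of_le ?_ (nnnorm_le_sr hlam_mem)
      have e1 : ((1/100:ℝ):ℂ) = (1/100:ℂ) := by norm_num
      have e2 : ((3/16:ℝ):ℂ) = (3/16:ℂ) := by norm_num
      rw [← e1, ← e2, Complex.nnnorm_real, Complex.nnnorm_real, Complex.nnnorm_real,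
        ← ENNReal.coe_mul, ENNReal.coe_lt_coe, ← NNReal.coe_lt_coe]
      push_cast
      rw [Real.norm_eq_abs, Real.norm_eq_abs, Real.norm_eq_abs]
      have hlam : lam < 0 := by
        unfold lam
        nlinarith [Real.sqrt_nonneg ((9201/160000:ℝ)^2 - 9/640000)]
      rw [abs_of_neg hlam]
      unfold lam
      rw [abs_of_pos, abs_of_pos] <;> [skip; norm_num; norm_num]
      nlinarith [Real.sqrt_nonneg ((9201/160000:ℝ)^2 - 9/640000)]
  · -- subadditive violation
    refine ⟨!![1,0;0,1/2], !![1,0;0,1/2], !![1/2,0;0,1], !![1/2,0;0,1],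
      ?_, ?_, ?_, ?_, ?_, ?_, ?_, ?_, ?_⟩
    · have h : (!![(1:ℂ),0;0,1/2] : Matrix (Fin 2) (Fin 2) ℂ) = diagonal ![1,1/2] := by
        ext i j; fin_cases i <;> fin_cases j <;> simp [diagonal]
      rw [h]
      exact Matrix.posDef_diagonal_iff.mpr fun i => by
        fin_cases i <;> (rw [Complex.lt_def]; norm_num)
    · have h : (!![(1:ℂ),0;0,1/2] : Matrix (Fin 2) (Fin 2) ℂ) = diagonal ![1,1/2] := by
        ext i j; fin_cases i <;> fin_cases j <;> simp [diagonal]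
      rw [h]
      exact Matrix.posDef_diagonal_iff.mpr fun i => by
        fin_cases i <;> (rw [Complex.lt_def]; norm_num)
    · have h : (!![(1/2:ℂ),0;0,1] : Matrix (Fin 2) (Fin 2) ℂ) = diagonal ![1/2,1] := by
        ext i j; fin_cases i <;> fin_cases j <;> simp [diagonal]
      rw [h]
      exact Matrix.posDef_diagonal_iff.mpr fun i => by
        fin_cases i <;> (rw [Complex.lt_def]; norm_num)
    · have h : (!![(1/2:ℂ),0;0,1] : Matrix (Fin 2) (Fin 2) ℂ) = diagonal ![1/2,1] := by
        ext i j; fin_cases i <;> fin_cases j <;> simp [diagonal]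
      rw [h]
      exact Matrix.posDef_diagonal_iff.mpr fun i => by
        fin_cases i <;> (rw [Complex.lt_def]; norm_num)
    · have h : (1 - !![(1:ℂ),0;0,1/2] : Matrix (Fin 2) (Fin 2) ℂ) = diagonal ![0,1/2] := by
        ext i j; fin_cases i <;> fin_cases j <;>
          simp [diagonal, Matrix.one_apply] <;> norm_num
      rw [h]
      exact Matrix.posSemidef_diagonal_iff.mpr fun i => by
        fin_cases i <;> (rw [Complex.le_def]; norm_num)
    · have h : (1 - !![(1:ℂ),0;0,1/2] : Matrix (Fin 2) (Fin 2) ℂ) = diagonal ![0,1/2] := by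
        ext i j; fin_cases i <;> fin_cases j <;>
          simp [diagonal, Matrix.one_apply] <;> norm_num
      rw [h]
      exact Matrix.posSemidef_diagonal_iff.mpr fun i => by
        fin_cases i <;> (rw [Complex.le_def]; norm_num)
    · have h : (1 - !![(1/2:ℂ),0;0,1] : Matrix (Fin 2) (Fin 2) ℂ) = diagonal ![1/2,0] := by
        ext i j; fin_cases i <;> fin_cases j <;>
          simp [diagonal, Matrix.one_apply] <;> norm_num
      rw [h]
      exact Matrix.posSemidef_diagonal_iff.mpr fun i => by
        fin_cases i <;> (rw [Complex.le_def]; norm_num)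
    · have h : (1 - !![(1/2:ℂ),0;0,1] : Matrix (Fin 2) (Fin 2) ℂ) = diagonal ![1/2,0] := by
        ext i j; fin_cases i <;> fin_cases j <;>
          simp [diagonal, Matrix.one_apply] <;> norm_num
      rw [h]
      exact Matrix.posSemidef_diagonal_iff.mpr fun i => by
        fin_cases i <;> (rw [Complex.le_def]; norm_num)
    · have hAA : (!![(1:ℂ),0;0,1/2]) * !![(1:ℂ),0;0,1/2] = !![(1:ℂ),0;0,1/4] := by
        norm_num [Matrix.mul_fin_two]
      have hBB : (!![(1/2:ℂ),0;0,1]) * !![(1/2:ℂ),0;0,1] = !![(1/4:ℂ),0;0,1] := by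
        norm_num [Matrix.mul_fin_two]
      have hM : (!![(1:ℂ),0;0,1/2]) * !![(1/2:ℂ),0;0,1] * !![(1:ℂ),0;0,1/2]
            * !![(1/2:ℂ),0;0,1] = !![(1/4:ℂ),0;0,1/4] := by
        norm_num [Matrix.mul_fin_two]
      rw [hAA, hBB, hM]
      have hspecA : spectrum ℂ (!![(1:ℂ),0;0,1/4]) = {1, 1/4} := by
        ext z
        rw [mem_spec]
        simp only [Set.mem_insert_iff, Set.mem_singleton_iff]
        norm_num [Matrix.cons_val_zero, Matrix.cons_val_one, sub_eq_zero]
      have hspecB : spectrum ℂ (!![(1/4:ℂ),0;0,1]) = {1/4, 1} := by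
        ext z
        rw [mem_spec]
        simp only [Set.mem_insert_iff, Set.mem_singleton_iff]
        norm_num [Matrix.cons_val_zero, Matrix.cons_val_one, sub_eq_zero]
      have hspecM : spectrum ℂ (!![(1/4:ℂ),0;0,1/4]) = {1/4} := by
        ext z
        rw [mem_spec]
        simp only [Set.mem_singleton_iff]
        norm_num [Matrix.cons_val_zero, Matrix.cons_val_one, sub_eq_zero]
      rw [sr_pair _ _ _ hspecA, sr_pair _ _ _ hspecB, sr_singleton _ _ hspecM]
      have e : ((1/4:ℝ):ℂ) = (1/4:ℂ) := by norm_num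
      rw [← e]
      simp [Complex.nnnorm_real]
end

section
/- There exist 2×2 Hermitian positive definite matrices A₁, A₂, A₃ with all eigenvalues in (0,1] such that ρ(A₁²A₂²A₃²) < ρ(A₁A₂A₃)², where ρ is the spectral radius. There also exist such matrices with ρ(A₁²A₂²A₃²) > ρ(A₁A₂A₃). -/
open Matrix
open scoped ComplexOrder

/-!
For a `2 × 2` complex matrix the spectrum is the set of roots of `z ^ 2 - tr M * z + det M`, so
all spectral radii below are computed from a trace and a determinant. The witnesses are real
symmetric, so every product of them is a real matrix with rational trace and determinant.
In the first example all eigenvalues involved are rational and the spectral radii are exact.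
In the second, `A₁ A₂ A₃` has a pair of complex conjugate eigenvalues, hence spectral radius
`√(det (A₁ A₂ A₃))`, whereas `A₁² A₂² A₃²` has a trace so large that `|tr| / 2` already exceeds it.
-/

namespace Matrix

section Hermitian

variable {𝕜 : Type*} [RCLike 𝕜] {A : Matrix (Fin 2) (Fin 2) 𝕜}

theorem IsHermitian.posDef_fin_two_iff (hA : A.IsHermitian) :
    A.PosDef ↔ 0 < A.trace ∧ 0 < A.det := by
  rw [hA.posDef_iff_eigenvalues_pos, hA.trace_eq_sum_eigenvalues, hA.det_eq_prod_eigenvalues]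
  simp only [Fin.forall_fin_two, Fin.sum_univ_two, Fin.prod_univ_two]
  norm_cast
  constructor
  · rintro ⟨h₀, h₁⟩
    exact ⟨by positivity, by positivity⟩
  · rintro ⟨hsum, hprod⟩
    constructor <;> nlinarith [mul_self_nonneg (hA.eigenvalues 0)]

theorem IsHermitian.posSemidef_fin_two_iff (hA : A.IsHermitian) :
    A.PosSemidef ↔ 0 ≤ A.trace ∧ 0 ≤ A.det := by
  rw [hA.posSemidef_iff_eigenvalues_nonneg, hA.trace_eq_sum_eigenvalues,
    hA.det_eq_prod_eigenvalues, Pi.le_def]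
  simp only [Fin.forall_fin_two, Fin.sum_univ_two, Fin.prod_univ_two, Pi.zero_apply]
  norm_cast
  constructor
  · rintro ⟨h₀, h₁⟩
    exact ⟨by positivity, by positivity⟩
  · rintro ⟨hsum, hprod⟩
    constructor <;>
      nlinarith [mul_self_nonneg (hA.eigenvalues 0), mul_self_nonneg (hA.eigenvalues 1)]

end Hermitian

section Spectrum

variable {K : Type*} [Field K] (M : Matrix (Fin 2) (Fin 2) K)

theorem mem_spectrum_fin_two_iff {z : K} :
    z ∈ spectrum K M ↔ z ^ 2 - M.trace * z + M.det = 0 := by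
  simp [mem_spectrum_iff_isRoot_charpoly, charpoly_fin_two]

theorem spectrum_fin_two_eq_pair {μ ν : K} (htr : M.trace = μ + ν) (hdet : M.det = μ * ν) :
    spectrum K M = {μ, ν} := by
  ext z
  rw [mem_spectrum_fin_two_iff, htr, hdet, Set.mem_insert_iff, Set.mem_singleton_iff,
    ← sub_eq_zero (a := z), ← sub_eq_zero (a := z), ← mul_eq_zero]
  ring_nf

end Spectrum

section SpectralRadius

variable {𝕜 : Type*} [NormedField 𝕜] (M : Matrix (Fin 2) (Fin 2) 𝕜)

theorem spectralRadius_fin_two_eq_max {μ ν : 𝕜} (htr : M.trace = μ + ν) (hdet : M.det = μ * ν) :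
    spectralRadius 𝕜 M = max ‖μ‖ₑ ‖ν‖ₑ := by
  rw [spectralRadius, spectrum_fin_two_eq_pair M htr hdet, iSup_insert, iSup_singleton]
  rfl

theorem ofReal_norm_trace_div_two_le_spectralRadius [IsAlgClosed 𝕜] :
    ENNReal.ofReal (‖M.trace‖ / 2) ≤ spectralRadius 𝕜 M := by
  obtain ⟨μ, hμ⟩ := IsAlgClosed.exists_root M.charpoly (by simp [charpoly_degree_eq_dim])
  have hdet : M.det = μ * (M.trace - μ) := by
    simp only [Polynomial.IsRoot.def, charpoly_fin_two, Polynomial.eval_add, Polynomial.eval_sub,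
      Polynomial.eval_pow, Polynomial.eval_mul, Polynomial.eval_C, Polynomial.eval_X] at hμ
    linear_combination hμ
  rw [spectralRadius_fin_two_eq_max M (add_sub_cancel μ M.trace).symm hdet, ← ofReal_norm,
    ← ofReal_norm, ← ENNReal.ofReal_max]
  refine ENNReal.ofReal_le_ofReal ?_
  have htri := norm_add_le μ (M.trace - μ)
  rw [add_sub_cancel] at htri
  linarith [le_max_left ‖μ‖ ‖M.trace - μ‖, le_max_right ‖μ‖ ‖M.trace - μ‖]

end SpectralRadius

section RealMatrix

variable (N : Matrix (Fin 2) (Fin 2) ℝ)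

theorem trace_mapMatrix_ofReal : (Complex.ofRealHom.mapMatrix N).trace = N.trace :=
  (AddMonoidHom.map_trace Complex.ofRealHom N).symm

theorem det_mapMatrix_ofReal : (Complex.ofRealHom.mapMatrix N).det = N.det :=
  (Complex.ofRealHom.map_det N).symm

theorem spectralRadius_mapMatrix_ofReal_of_roots {μ ν : ℝ} (htr : N.trace = μ + ν)
    (hdet : N.det = μ * ν) :
    spectralRadius ℂ (Complex.ofRealHom.mapMatrix N) = ENNReal.ofReal (max |μ| |ν|) := by
  have htr' : (Complex.ofRealHom.mapMatrix N).trace = μ + ν := by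
    rw [trace_mapMatrix_ofReal, htr, Complex.ofReal_add]
  have hdet' : (Complex.ofRealHom.mapMatrix N).det = μ * ν := by
    rw [det_mapMatrix_ofReal, hdet, Complex.ofReal_mul]
  simp only [spectralRadius_fin_two_eq_max _ htr' hdet', ENNReal.ofReal_max, ← ofReal_norm,
    Complex.norm_real, Real.norm_eq_abs]

/-- A real `2 × 2` matrix with negative discriminant has conjugate eigenvalues, both of
modulus `√(det N)`. -/
theorem spectralRadius_mapMatrix_ofReal_of_discrim_neg (hdisc : N.trace ^ 2 < 4 * N.det) :
    spectralRadius ℂ (Complex.ofRealHom.mapMatrix N) = ENNReal.ofReal √N.det := by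
  set t := N.trace
  set s := √(N.det - t ^ 2 / 4)
  have hs : s ^ 2 = N.det - t ^ 2 / 4 := Real.sq_sqrt (by linarith)
  have hs' : (s : ℂ) ^ 2 = N.det - t ^ 2 / 4 := by exact_mod_cast hs
  have hnorm (σ : ℝ) (hσ : σ ^ 2 = s ^ 2) :
      ‖((t / 2 : ℝ) + σ * Complex.I : ℂ)‖ₑ = ENNReal.ofReal √N.det := by
    rw [← ofReal_norm, Complex.norm_add_mul_I]
    congr 2
    linear_combination hσ + hs
  rw [spectralRadius_fin_two_eq_max _ (μ := (t / 2 : ℝ) + s * Complex.I)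
      (ν := (t / 2 : ℝ) + (-s : ℝ) * Complex.I)
      (by rw [trace_mapMatrix_ofReal]; push_cast; ring)
      (by rw [det_mapMatrix_ofReal]; push_cast; linear_combination -hs' + s ^ 2 * Complex.I_sq),
    hnorm s rfl, hnorm (-s) (neg_sq s), max_self]

end RealMatrix

end Matrix

def realSymm (a b c : ℝ) : Matrix (Fin 2) (Fin 2) ℂ :=
  Complex.ofRealHom.mapMatrix !![a, b; b, c]

theorem realSymm_isHermitian (a b c : ℝ) : (realSymm a b c).IsHermitian := by
  ext i j
  fin_cases i <;> fin_cases j <;> simp [realSymm]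

theorem one_sub_realSymm (a b c : ℝ) : 1 - realSymm a b c = realSymm (1 - a) (-b) (1 - c) := by
  ext i j
  fin_cases i <;> fin_cases j <;> simp [realSymm]

theorem realSymm_posDef {a b c : ℝ} (ha : 0 < a) (hdet : b ^ 2 < a * c) :
    (realSymm a b c).PosDef := by
  rw [(realSymm_isHermitian a b c).posDef_fin_two_iff, realSymm, trace_mapMatrix_ofReal,
    det_mapMatrix_ofReal, Complex.zero_lt_real, Complex.zero_lt_real, trace_fin_two_of,
    det_fin_two_of]
  constructor <;> nlinarith

theorem realSymm_posSemidef {a b c : ℝ} (ha : 0 ≤ a) (hc : 0 ≤ c) (hdet : b ^ 2 ≤ a * c) :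
    (realSymm a b c).PosSemidef := by
  rw [(realSymm_isHermitian a b c).posSemidef_fin_two_iff, realSymm, trace_mapMatrix_ofReal,
    det_mapMatrix_ofReal, Complex.zero_le_real, Complex.zero_le_real, trace_fin_two_of,
    det_fin_two_of]
  constructor <;> nlinarith

theorem exists_spectralRadius_squares_lt_sq :
    ∃ A₁ A₂ A₃ : Matrix (Fin 2) (Fin 2) ℂ,
      A₁.PosDef ∧ A₂.PosDef ∧ A₃.PosDef ∧
      (1 - A₁).PosSemidef ∧ (1 - A₂).PosSemidef ∧ (1 - A₃).PosSemidef ∧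
      spectralRadius ℂ (A₁ ^ 2 * A₂ ^ 2 * A₃ ^ 2) < (spectralRadius ℂ (A₁ * A₂ * A₃)) ^ 2 := by
  refine ⟨realSymm (1 / 4) (3 / 8) (5 / 8), realSymm (5 / 8) 0 (3 / 8),
    realSymm (1 / 8) (-1 / 8) (31 / 102), ?_, ?_, ?_, ?_, ?_, ?_, ?_⟩
  iterate 3 exact realSymm_posDef (by norm_num) (by norm_num)
  iterate 3
    exact one_sub_realSymm .. ▸ realSymm_posSemidef (by norm_num) (by norm_num) (by norm_num)
  simp only [realSymm, ← map_mul, ← map_pow]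
  rw [spectralRadius_mapMatrix_ofReal_of_roots _ (μ := 25 / 4456448) (ν := 5329 / 4456448)
      (by norm_num [pow_two, mul_fin_two, trace_fin_two_of])
      (by norm_num [det_mul, det_pow, det_fin_two_of]),
    spectralRadius_mapMatrix_ofReal_of_roots _ (μ := 1 / 512) (ν := 365 / 8704)
      (by norm_num [mul_fin_two, trace_fin_two_of]) (by norm_num [det_mul, det_fin_two_of]),
    ← ENNReal.ofReal_pow (by positivity), ENNReal.ofReal_lt_ofReal_iff (by positivity)]
  norm_num

theorem exists_spectralRadius_lt_spectralRadius_squares :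
    ∃ A₁ A₂ A₃ : Matrix (Fin 2) (Fin 2) ℂ,
      A₁.PosDef ∧ A₂.PosDef ∧ A₃.PosDef ∧
      (1 - A₁).PosSemidef ∧ (1 - A₂).PosSemidef ∧ (1 - A₃).PosSemidef ∧
      spectralRadius ℂ (A₁ * A₂ * A₃) < spectralRadius ℂ (A₁ ^ 2 * A₂ ^ 2 * A₃ ^ 2) := by
  refine ⟨realSymm 1 0 (3 / 16), realSymm (1 / 16) (7 / 32) (25 / 32),
    realSymm (9 / 32) (-13 / 32) (19 / 32), ?_, ?_, ?_, ?_, ?_, ?_, ?_⟩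
  iterate 3 exact realSymm_posDef (by norm_num) (by norm_num)
  iterate 3
    exact one_sub_realSymm .. ▸ realSymm_posSemidef (by norm_num) (by norm_num) (by norm_num)
  simp only [realSymm, ← map_mul, ← map_pow]
  rw [spectralRadius_mapMatrix_ofReal_of_discrim_neg _
    (by norm_num [mul_fin_two, trace_fin_two_of, det_mul, det_fin_two_of])]
  -- `√(3 / 2 ^ 23) ≈ 6.0e-4`, while `|tr (A₁² A₂² A₃²)| / 2 = 1452995 / 2 ^ 26 ≈ 2.2e-2`.
  refine lt_of_lt_of_le ?_ (ofReal_norm_trace_div_two_le_spectralRadius _)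
  rw [ENNReal.ofReal_lt_ofReal_iff_of_nonneg (Real.sqrt_nonneg _), trace_mapMatrix_ofReal,
    Complex.norm_real, Real.sqrt_lt' (by norm_num [pow_two, mul_fin_two, trace_fin_two_of])]
  norm_num [pow_two, mul_fin_two, trace_fin_two_of, det_mul, det_fin_two_of]

/-- There are 2×2 Hermitian positive definite matrices `A₁, A₂, A₃` with eigenvalues in
`(0,1]` such that `ρ(A₁²A₂²A₃²) < ρ(A₁A₂A₃)²`, and other such matrices with
`ρ(A₁²A₂²A₃²) > ρ(A₁A₂A₃)`. -/
theorem stmt_15 :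
    (∃ A₁ A₂ A₃ : Matrix (Fin 2) (Fin 2) ℂ,
      A₁.PosDef ∧ A₂.PosDef ∧ A₃.PosDef ∧
      (1 - A₁).PosSemidef ∧ (1 - A₂).PosSemidef ∧ (1 - A₃).PosSemidef ∧
      spectralRadius ℂ (A₁ ^ 2 * A₂ ^ 2 * A₃ ^ 2) <
        (spectralRadius ℂ (A₁ * A₂ * A₃)) ^ 2) ∧
    (∃ A₁ A₂ A₃ : Matrix (Fin 2) (Fin 2) ℂ,
      A₁.PosDef ∧ A₂.PosDef ∧ A₃.PosDef ∧
      (1 - A₁).PosSemidef ∧ (1 - A₂).PosSemidef ∧ (1 - A₃).PosSemidef ∧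
      spectralRadius ℂ (A₁ * A₂ * A₃) <
        spectralRadius ℂ (A₁ ^ 2 * A₂ ^ 2 * A₃ ^ 2)) :=
  ⟨exists_spectralRadius_squares_lt_sq, exists_spectralRadius_lt_spectralRadius_squares⟩
end
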